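/- Let (x_n) be any sequence of complex numbers satisfying x_{n+2} = −x_{n+1} + x_n. If n is a positive integer congruent to 2 modulo 4 with n ≥ 6, then x_0 + x_1 + ... + x_{n-1} = L_{n/2} · x_{n/2 − 2}, where L denotes the Lucas numbers. -/

import Mathlib

/-!
Extend `x` two steps backwards by the recurrence to a sequence `y` (`extendBackTwo x`) with
`y (k + 2) = x k`. Since `x k = x (k + 1) + x (k + 2)`, one has `x k = y k - y (k + 1)`, so the
sum telescopes to `y 0 - y n`. The Lucas identity
`L m * y (k + m) = y k + (-1) ^ m * y (k + 2 * m)`, taken at `k = 0` and the odd index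
`m = n / 2`, turns `y 0 - y (2 * m)` into `L m * y m = L m * x (m - 2)`.
-/

section NegFibonacciRecurrence

variable {R : Type*} [CommRing R] {x : ℕ → R}

theorem lucas_mul_eq_add_neg_one_pow_mul (L : ℕ → ℕ) (hL0 : L 0 = 2) (hL1 : L 1 = 1)
    (hL : ∀ n, L (n + 2) = L (n + 1) + L n) (hx : ∀ n, x (n + 2) = -x (n + 1) + x n)
    (m k : ℕ) :
    (L m : R) * x (k + m) = x k + (-1) ^ m * x (k + 2 * m) := by
  induction m using Nat.twoStepInduction generalizing k with
  | zero => simp only [hL0, add_zero, mul_zero, pow_zero, one_mul]; push_cast; ring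
  | one => simp [hL1, hx]
  | more m ih₀ ih₁ =>
    have h₀ := ih₀ (k + 2)
    have h₁ := ih₁ (k + 1)
    rw [show k + 2 + m = k + (m + 2) by ring, show k + 2 + 2 * m = k + 2 * m + 2 by ring] at h₀
    rw [show k + 1 + (m + 1) = k + (m + 2) by ring,
      show k + 1 + 2 * (m + 1) = k + 2 * m + 3 by ring, pow_succ] at h₁
    rw [hL, Nat.cast_add, show k + 2 * (m + 2) = k + 2 * m + 4 by ring]
    linear_combination h₀ + h₁ + hx k - (-1) ^ m * hx (k + 2 * m + 2)

/-- The sequence `x` preceded by the two terms `x (-2)`, `x (-1)` that the recurrence forces. -/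
def extendBackTwo (x : ℕ → R) : ℕ → R
  | 0 => 2 * x 0 + x 1
  | 1 => x 0 + x 1
  | k + 2 => x k

theorem extendBackTwo_add_two (k : ℕ) : extendBackTwo x (k + 2) = x k := rfl

theorem extendBackTwo_recurrence (hx : ∀ n, x (n + 2) = -x (n + 1) + x n) (n : ℕ) :
    extendBackTwo x (n + 2) = -extendBackTwo x (n + 1) + extendBackTwo x n := by
  rcases n with _ | _ | n
  · simp only [extendBackTwo]; ring
  · simp only [extendBackTwo]; ring
  · exact hx n

theorem extendBackTwo_sub_succ (hx : ∀ n, x (n + 2) = -x (n + 1) + x n) (k : ℕ) :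
    extendBackTwo x k - extendBackTwo x (k + 1) = x k := by
  rcases k with _ | _ | k
  · simp only [extendBackTwo]; ring
  · simp only [extendBackTwo]; ring
  · simp only [extendBackTwo, hx k]; ring

theorem sum_range_eq_extendBackTwo_sub (hx : ∀ n, x (n + 2) = -x (n + 1) + x n) (n : ℕ) :
    ∑ k ∈ Finset.range n, x k = extendBackTwo x 0 - extendBackTwo x n := by
  simp only [← extendBackTwo_sub_succ hx, Finset.sum_range_sub']

end NegFibonacciRecurrence

theorem sum_general_neg_fib (L : ℕ → ℕ) (hL0 : L 0 = 2) (hL1 : L 1 = 1)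
    (hL : ∀ n, L (n + 2) = L (n + 1) + L n)
    (x : ℕ → ℂ) (hx : ∀ n, x (n + 2) = -x (n + 1) + x n)
    (n : ℕ) (hn : 6 ≤ n) (hn4 : n % 4 = 2) :
    (∑ k ∈ Finset.range n, x k) = (L (n / 2) : ℂ) * x (n / 2 - 2) := by
  obtain ⟨m, hnm, hm2, hodd⟩ : ∃ m, n = 2 * m ∧ 2 ≤ m ∧ Odd m :=
    ⟨n / 2, by omega, by omega, by rw [Nat.odd_iff]; omega⟩
  have hlucas := lucas_mul_eq_add_neg_one_pow_mul L hL0 hL1 hL (extendBackTwo_recurrence hx) m 0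
  rw [zero_add, zero_add, hodd.neg_one_pow] at hlucas
  calc ∑ k ∈ Finset.range n, x k = extendBackTwo x 0 - extendBackTwo x n :=
        sum_range_eq_extendBackTwo_sub hx n
    _ = L m * extendBackTwo x m := by rw [hlucas, hnm]; ring
    _ = L (n / 2) * x (n / 2 - 2) := by
        rw [hnm, Nat.mul_div_cancel_left m two_pos, ← extendBackTwo_add_two (x := x),
          Nat.sub_add_cancel hm2]
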